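/- arXiv:2403.01920 — 2 statements merged into one kernel-verified Lean document; each statement's English description precedes it below -/
import Mathlib

section
/- Let x_λ denote the unique minimizer of x ↦ λ‖Ax − b‖²_{M⁻¹} + ‖x‖²_{N⁻¹} for λ ≥ 0. Then the function H(λ) := ½(‖A x_λ − b‖²_{M⁻¹} − τm) is strictly monotonically decreasing on the set of λ ≥ 0 for which x_{λ₁} ≠ x_{λ₂} whenever λ₁ ≠ λ₂; in particular, if λ₁ ≠ λ₂ and x_{λ₁} ≠ x_{λ₂}, then (λ₁ − λ₂)(H(λ₁) − H(λ₂)) < 0. -/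
/-! `x_λ` solves the normal equations of the strictly convex quadratic
`y ↦ λ ‖A y - b‖²_{M⁻¹} + ‖y‖²_{N⁻¹}`, so it is its unique strict minimizer. Testing the
minimality of `x_{λ₁}` at `x_{λ₂}` and vice versa and adding the two strict inequalities, the
`‖y‖²_{N⁻¹}` terms cancel and leave `(λ₁ - λ₂)(‖A x_{λ₁} - b‖² - ‖A x_{λ₂} - b‖²) < 0`. -/

open Matrix

namespace Matrix

variable {ι κ : Type*} [Fintype ι] [Fintype κ]

lemma IsSymm.dotProduct_mulVec_comm {S : Matrix ι ι ℝ} (hS : S.IsSymm) (u v : ι → ℝ) :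
    u ⬝ᵥ (S *ᵥ v) = v ⬝ᵥ (S *ᵥ u) := by
  rw [dotProduct_mulVec, ← hS.eq, vecMul_transpose, dotProduct_comm, hS.eq]

lemma IsSymm.dotProduct_mulVec_add {S : Matrix ι ι ℝ} (hS : S.IsSymm) (u v : ι → ℝ) :
    (u + v) ⬝ᵥ (S *ᵥ (u + v)) = u ⬝ᵥ (S *ᵥ u) + 2 * (v ⬝ᵥ (S *ᵥ u)) + v ⬝ᵥ (S *ᵥ v) := by
  simp only [mulVec_add, dotProduct_add, add_dotProduct, hS.dotProduct_mulVec_comm u v]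
  ring

-- The normal equations of `y ↦ lam ‖A y - b‖²_Q + ‖y‖²_P`, as vanishing of its (half) gradient.
lemma tikhonov_gradient_eq_zero_of_mulVec_eq {P : Matrix κ κ ℝ} {Q : Matrix ι ι ℝ}
    {A : Matrix ι κ ℝ} {b : ι → ℝ} {lam : ℝ} {x : κ → ℝ}
    (hx : (P + lam • (Aᵀ * Q * A)) *ᵥ x = lam • (Aᵀ *ᵥ (Q *ᵥ b))) :
    P *ᵥ x + lam • (Aᵀ *ᵥ (Q *ᵥ (A *ᵥ x - b))) = 0 := by
  rw [add_mulVec, smul_mulVec, ← mulVec_mulVec, ← mulVec_mulVec] at hx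
  rw [mulVec_sub, mulVec_sub, smul_sub, ← hx]
  abel

theorem PosDef.tikhonov_lt_of_mulVec_eq {P : Matrix κ κ ℝ} {Q : Matrix ι ι ℝ}
    (hP : P.PosDef) (hQ : Q.PosSemidef) (A : Matrix ι κ ℝ) (b : ι → ℝ) {lam : ℝ} (hlam : 0 ≤ lam)
    {x : κ → ℝ} (hx : (P + lam • (Aᵀ * Q * A)) *ᵥ x = lam • (Aᵀ *ᵥ (Q *ᵥ b)))
    {y : κ → ℝ} (hy : y ≠ x) :
    lam * ((A *ᵥ x - b) ⬝ᵥ (Q *ᵥ (A *ᵥ x - b))) + x ⬝ᵥ (P *ᵥ x) <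
      lam * ((A *ᵥ y - b) ⬝ᵥ (Q *ᵥ (A *ᵥ y - b))) + y ⬝ᵥ (P *ᵥ y) := by
  obtain ⟨d, rfl⟩ : ∃ d, y = x + d := ⟨y - x, by abel⟩
  have hd : d ≠ 0 := fun h ↦ hy (by simp [h])
  have hres : A *ᵥ (x + d) - b = (A *ᵥ x - b) + A *ᵥ d := by rw [mulVec_add]; abel
  -- the cross terms are `d` paired with the gradient at `x`
  have hcross : lam * ((A *ᵥ d) ⬝ᵥ (Q *ᵥ (A *ᵥ x - b))) + d ⬝ᵥ (P *ᵥ x) = 0 := by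
    have := congrArg (d ⬝ᵥ ·) (tikhonov_gradient_eq_zero_of_mulVec_eq hx)
    simp only [dotProduct_add, dotProduct_smul, smul_eq_mul, dotProduct_zero] at this
    rwa [dotProduct_mulVec d Aᵀ, vecMul_transpose, add_comm] at this
  have hPd : 0 < d ⬝ᵥ (P *ᵥ d) := by simpa using hP.dotProduct_mulVec_pos hd
  have hQd : 0 ≤ (A *ᵥ d) ⬝ᵥ (Q *ᵥ (A *ᵥ d)) := by
    simpa using hQ.dotProduct_mulVec_nonneg (A *ᵥ d)
  rw [hres, (isHermitian_iff_isSymm.mp hQ.isHermitian).dotProduct_mulVec_add,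
    (isHermitian_iff_isSymm.mp hP.isHermitian).dotProduct_mulVec_add]
  nlinarith [mul_nonneg hlam hQd]

end Matrix

lemma sub_mul_sub_neg_of_strictMin {α : Type*} (g h : α → ℝ) {lam₁ lam₂ : ℝ} {x₁ x₂ : α}
    (hne : x₁ ≠ x₂) (h₁ : ∀ y, y ≠ x₁ → lam₁ * g x₁ + h x₁ < lam₁ * g y + h y)
    (h₂ : ∀ y, y ≠ x₂ → lam₂ * g x₂ + h x₂ < lam₂ * g y + h y) :
    (lam₁ - lam₂) * (g x₁ - g x₂) < 0 := by
  nlinarith [h₁ x₂ hne.symm, h₂ x₁ hne]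

theorem stmt_2_general {m n : ℕ} (A : Matrix (Fin m) (Fin n) ℝ) (b : Fin m → ℝ)
    (M : Matrix (Fin m) (Fin m) ℝ) (N : Matrix (Fin n) (Fin n) ℝ)
    (hM : M.PosDef) (hN : N.PosDef) (τm : ℝ)
    (xl : ℝ → (Fin n → ℝ))
    (hxl : ∀ lam : ℝ, 0 ≤ lam →
      (N⁻¹ + lam • (Aᵀ * M⁻¹ * A)) *ᵥ xl lam = lam • (Aᵀ *ᵥ (M⁻¹ *ᵥ b)))
    (H : ℝ → ℝ)
    (hH : ∀ lam : ℝ, H lam =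
      (1 / 2) * ((A *ᵥ xl lam - b) ⬝ᵥ (M⁻¹ *ᵥ (A *ᵥ xl lam - b)) - τm)) :
    ∀ lam1 lam2 : ℝ, 0 ≤ lam1 → 0 ≤ lam2 → lam1 ≠ lam2 → xl lam1 ≠ xl lam2 →
      (lam1 - lam2) * (H lam1 - H lam2) < 0 := by
  intro lam1 lam2 h1 h2 _ hxne
  have hmin := fun lam (hlam : 0 ≤ lam) y (hy : y ≠ xl lam) ↦
    hN.inv.tikhonov_lt_of_mulVec_eq hM.inv.posSemidef A b hlam (hxl lam hlam) hy
  have := sub_mul_sub_neg_of_strictMin (fun x ↦ (A *ᵥ x - b) ⬝ᵥ (M⁻¹ *ᵥ (A *ᵥ x - b)))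
    (fun x ↦ x ⬝ᵥ (N⁻¹ *ᵥ x)) hxne (hmin lam1 h1) (hmin lam2 h2)
  rw [hH lam1, hH lam2]
  linarith

/-- With x_λ the unique solution of (N⁻¹ + λAᵀM⁻¹A)x = λAᵀM⁻¹b and
H(λ) = ½(‖A x_λ − b‖²_{M⁻¹} − τm), if λ₁ ≠ λ₂ and x_{λ₁} ≠ x_{λ₂} then
(λ₁ − λ₂)(H(λ₁) − H(λ₂)) < 0. -/
theorem stmt_2 {m n : ℕ} (A : Matrix (Fin m) (Fin n) ℝ) (b : Fin m → ℝ)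
    (M : Matrix (Fin m) (Fin m) ℝ) (N : Matrix (Fin n) (Fin n) ℝ)
    (hM : M.PosDef) (hN : N.PosDef) (τm : ℝ) (hτm : 0 < τm)
    (xl : ℝ → (Fin n → ℝ))
    (hxl : ∀ lam : ℝ, 0 ≤ lam →
      (N⁻¹ + lam • (Aᵀ * M⁻¹ * A)) *ᵥ xl lam = lam • (Aᵀ *ᵥ (M⁻¹ *ᵥ b)))
    (H : ℝ → ℝ)
    (hH : ∀ lam : ℝ, H lam =
      (1 / 2) * ((A *ᵥ xl lam - b) ⬝ᵥ (M⁻¹ *ᵥ (A *ᵥ xl lam - b)) - τm)) :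
    ∀ lam1 lam2 : ℝ, 0 ≤ lam1 → 0 ≤ lam2 → lam1 ≠ lam2 → xl lam1 ≠ xl lam2 →
      (lam1 - lam2) * (H lam1 - H lam2) < 0 :=
  stmt_2_general A b M N hM hN τm xl hxl H hH
end

section
/- Define F(x, λ) = (λAᵀM⁻¹(Ax−b) + N⁻¹x, ½‖Ax−b‖²_{M⁻¹} − τm/2) ∈ ℝ^n × ℝ. Under the standing assumption, the equation F(x, λ) = 0 has a unique solution (x*, λ*) in ℝ^n × [0, ∞). -/
/-!
Minimize `x ↦ xᵀN⁻¹x` over `{x | ‖Ax - b‖²_{M⁻¹} ≤ τm}`, which contains a least-squares solution.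
A minimizer exists by coercivity. The constraint is active there: otherwise shrinking the
minimizer towards `0` stays feasible and decreases the objective (and `0` itself is infeasible,
as `τm < ‖b‖²_{M⁻¹}`). The misfit gradient does not vanish at the minimizer, since a stationary
point of the convex misfit is a least-squares solution, whose misfit is `< τm`; a first-order
argument then produces the multiplier `λ ≥ 0`. For uniqueness, convexity gives for any solution
`(x, λ)` and all `z` the bound `λτm + ‖x‖² + ‖z - x‖² ≤ λ‖Az - b‖² + ‖z‖²` (norms of `N⁻¹`);
adding it for two solutions forces `x = x'`, and then `λ = λ'` as the gradient is nonzero.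
-/

open Matrix Filter Topology

namespace Matrix

lemma PosSemidef.isSymm {ι : Type*} {P : Matrix ι ι ℝ} (hP : P.PosSemidef) : P.IsSymm :=
  isHermitian_iff_isSymm.mp hP.isHermitian

variable {ι : Type*} [Fintype ι]

lemma dotProduct_self_pos {v : ι → ℝ} (hv : v ≠ 0) : 0 < v ⬝ᵥ v := by
  simpa using dotProduct_self_star_pos_iff.mpr hv

lemma IsSymm.dotProduct_mulVec_comm_s5 {P : Matrix ι ι ℝ} (hP : P.IsSymm) (u w : ι → ℝ) :
    u ⬝ᵥ P *ᵥ w = w ⬝ᵥ P *ᵥ u := by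
  rw [dotProduct_mulVec, ← mulVec_transpose, hP.eq, dotProduct_comm]

lemma IsSymm.add_dotProduct_mulVec_add {P : Matrix ι ι ℝ} (hP : P.IsSymm) (r s : ι → ℝ) :
    (r + s) ⬝ᵥ P *ᵥ (r + s) = r ⬝ᵥ P *ᵥ r + 2 * (s ⬝ᵥ P *ᵥ r) + s ⬝ᵥ P *ᵥ s := by
  simp only [mulVec_add, add_dotProduct, dotProduct_add, hP.dotProduct_mulVec_comm_s5 r s]
  ring

lemma IsSymm.add_smul_dotProduct_mulVec_add_smul {P : Matrix ι ι ℝ} (hP : P.IsSymm)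
    (x d : ι → ℝ) (t : ℝ) :
    (x + t • d) ⬝ᵥ P *ᵥ (x + t • d) =
      x ⬝ᵥ P *ᵥ x + t * (2 * (d ⬝ᵥ P *ᵥ x)) + t ^ 2 * (d ⬝ᵥ P *ᵥ d) := by
  rw [hP.add_dotProduct_mulVec_add]
  simp only [mulVec_smul, smul_dotProduct, dotProduct_smul, smul_eq_mul]
  ring

lemma PosDef.exists_pos_mul_sq_norm_le {Q : Matrix ι ι ℝ} (hQ : Q.PosDef) :
    ∃ c > 0, ∀ x : ι → ℝ, c * ‖x‖ ^ 2 ≤ x ⬝ᵥ Q *ᵥ x := by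
  rcases isEmpty_or_nonempty ι with hι | hι
  · exact ⟨1, one_pos, fun x => by simp [Subsingleton.elim x 0]⟩
  have hcont : Continuous fun x : ι → ℝ => x ⬝ᵥ Q *ᵥ x := by fun_prop
  obtain ⟨u, hu, hmin⟩ := (isCompact_sphere (0 : ι → ℝ) 1).exists_isMinOn
    (NormedSpace.sphere_nonempty.mpr zero_le_one) hcont.continuousOn
  have hu0 : u ≠ 0 := ne_zero_of_mem_unit_sphere ⟨u, hu⟩
  refine ⟨u ⬝ᵥ Q *ᵥ u, by simpa using hQ.dotProduct_mulVec_pos hu0, fun x => ?_⟩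
  rcases eq_or_ne x 0 with rfl | hx
  · simp
  set w : ι → ℝ := (‖x‖⁻¹ : ℝ) • x
  have hw : u ⬝ᵥ Q *ᵥ u ≤ w ⬝ᵥ Q *ᵥ w := hmin (by simpa using norm_smul_inv_norm (𝕜 := ℝ) hx)
  have hxw : x ⬝ᵥ Q *ᵥ x = ‖x‖ ^ 2 * (w ⬝ᵥ Q *ᵥ w) := by
    simp only [w, mulVec_smul, smul_dotProduct, dotProduct_smul, smul_eq_mul]
    field_simp
  rw [hxw, mul_comm]
  gcongr

lemma PosDef.tendsto_dotProduct_mulVec_cocompact {Q : Matrix ι ι ℝ} (hQ : Q.PosDef) :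
    Tendsto (fun x => x ⬝ᵥ Q *ᵥ x) (cocompact (ι → ℝ)) atTop := by
  obtain ⟨c, hc, hle⟩ := hQ.exists_pos_mul_sq_norm_le
  refine tendsto_atTop_mono hle (Tendsto.const_mul_atTop hc ?_)
  exact (tendsto_pow_atTop two_ne_zero).comp tendsto_norm_cocompact_atTop

lemma exists_nonneg_smul_add_eq_zero {v c : ι → ℝ} (hv : v ≠ 0)
    (h : ∀ d, d ⬝ᵥ v < 0 → 0 ≤ d ⬝ᵥ c) : ∃ μ : ℝ, 0 ≤ μ ∧ μ • v + c = 0 := by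
  have hvv := dotProduct_self_pos hv
  set μ := -(v ⬝ᵥ c) / (v ⬝ᵥ v)
  set w := μ • v + c
  have hμ : μ * (v ⬝ᵥ v) = -(v ⬝ᵥ c) := div_mul_cancel₀ _ hvv.ne'
  have hc : c = w - μ • v := by simp [w]
  have hvw : v ⬝ᵥ w = 0 := by
    simp only [w, dotProduct_add, dotProduct_smul, smul_eq_mul, hμ]; ring
  have hw0 : w = 0 := by
    by_contra hw0
    have hww := dotProduct_self_pos hw0
    -- `w ⊥ v`, so this `d` has `d ⬝ᵥ v < 0` but `d ⬝ᵥ c = -(w ⬝ᵥ w) < 0`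
    have := h (-(w ⬝ᵥ w) • v - (μ * (v ⬝ᵥ v) + 1) • w) (by
      simp only [sub_dotProduct, smul_dotProduct, smul_eq_mul, dotProduct_comm w v, hvw]
      nlinarith)
    simp only [hc, sub_dotProduct, dotProduct_sub, smul_dotProduct, dotProduct_smul, smul_eq_mul,
      dotProduct_comm w v, hvw] at this
    nlinarith
  refine ⟨μ, ?_, hw0⟩
  have := h (-v) (by simpa using hvv)
  rw [neg_dotProduct, ← hμ] at this
  exact nonneg_of_mul_nonneg_left (by linarith) hvv

end Matrix

lemma exists_isMinOn_of_tendsto_cocompact {E α : Type*} [TopologicalSpace E] [LinearOrder α]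
    [TopologicalSpace α] [ClosedIicTopology α] {f : E → α} (hf : Continuous f)
    (htop : Tendsto f (cocompact E) atTop) {s : Set E} (hs : IsClosed s) (hne : s.Nonempty) :
    ∃ x ∈ s, IsMinOn f s x :=
  let ⟨_, hx₀⟩ := hne
  hf.continuousOn.exists_isMinOn' hs hx₀ ((htop.eventually_ge_atTop _).filter_mono inf_le_left)

lemma eventually_mul_add_sq_mul_neg {a : ℝ} (ha : a < 0) (e : ℝ) :
    ∀ᶠ t in 𝓝[>] (0 : ℝ), t * a + t ^ 2 * e < 0 := by
  have hlim : Tendsto (fun t : ℝ => a + t * e) (𝓝 0) (𝓝 a) :=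
    (by fun_prop : Continuous fun t : ℝ => a + t * e).tendsto' 0 a (by simp)
  filter_upwards [nhdsWithin_le_nhds (hlim.eventually_lt_const ha), self_mem_nhdsWithin]
    with t hneg (hpos : 0 < t)
  have := mul_neg_of_pos_of_neg hpos hneg
  linarith

section Misfit

variable {m n : Type*} [Fintype m] [Fintype n] (A : Matrix m n ℝ) (b : m → ℝ) (P : Matrix m m ℝ)

def misfit (x : n → ℝ) : ℝ := (A *ᵥ x - b) ⬝ᵥ (P *ᵥ (A *ᵥ x - b))

-- half the gradient of `misfit A b P` when `P` is symmetric
def misfitGrad (x : n → ℝ) : n → ℝ := Aᵀ *ᵥ (P *ᵥ (A *ᵥ x - b))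

@[simp]
lemma misfit_zero : misfit A b P 0 = b ⬝ᵥ P *ᵥ b := by
  simp [misfit, mulVec_neg]

@[fun_prop]
lemma continuous_misfit : Continuous (misfit A b P) := by
  unfold misfit; fun_prop

variable {P}

lemma misfit_add (hP : P.IsSymm) (x d : n → ℝ) :
    misfit A b P (x + d) =
      misfit A b P x + 2 * (d ⬝ᵥ misfitGrad A b P x) + (A *ᵥ d) ⬝ᵥ P *ᵥ (A *ᵥ d) := by
  rw [misfit, misfit, misfitGrad, mulVec_add, add_sub_right_comm, hP.add_dotProduct_mulVec_add,
    dotProduct_transpose_mulVec, dotProduct_comm (A *ᵥ d) (P *ᵥ (A *ᵥ x - b))]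

lemma misfit_add_smul (hP : P.IsSymm) (x d : n → ℝ) (t : ℝ) :
    misfit A b P (x + t • d) = misfit A b P x + t * (2 * (d ⬝ᵥ misfitGrad A b P x)) +
      t ^ 2 * ((A *ᵥ d) ⬝ᵥ P *ᵥ (A *ᵥ d)) := by
  rw [misfit_add A b hP]
  simp only [mulVec_smul, smul_dotProduct, dotProduct_smul, smul_eq_mul]
  ring

lemma misfit_le_of_misfitGrad_eq_zero (hP : P.PosSemidef) {x : n → ℝ}
    (hx : misfitGrad A b P x = 0) (z : n → ℝ) : misfit A b P x ≤ misfit A b P z := by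
  have hz := misfit_add A b hP.isSymm x (z - x)
  rw [add_sub_cancel, hx, dotProduct_zero] at hz
  have := hP.dotProduct_mulVec_nonneg (A *ᵥ (z - x))
  simp only [star_trivial] at this
  linarith

lemma exists_forall_misfit_le (hP : P.PosDef) :
    ∃ x : n → ℝ, ∀ z, misfit A b P x ≤ misfit A b P z := by
  -- minimize `y ↦ ‖y - b‖²_P` over the (closed) column space of `A`
  have htop : Tendsto (fun y => (y - b) ⬝ᵥ P *ᵥ (y - b)) (cocompact (m → ℝ)) atTop :=
    hP.tendsto_dotProduct_mulVec_cocompact.comp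
      (Homeomorph.subRight b).isClosedEmbedding.tendsto_cocompact
  obtain ⟨_, ⟨x, rfl⟩, hmin⟩ := exists_isMinOn_of_tendsto_cocompact (by fun_prop) htop
    (LinearMap.range A.mulVecLin).closed_of_finiteDimensional ⟨0, Submodule.zero_mem _⟩
  exact ⟨x, fun z => hmin ⟨z, rfl⟩⟩

end Misfit

section KKT

variable {m n : Type*} [Fintype m] [Fintype n] (A : Matrix m n ℝ) (b : m → ℝ)
  (P : Matrix m m ℝ) (Q : Matrix n n ℝ) (τ : ℝ)

-- `F(x, μ) = 0` with `μ ≥ 0`, for `P = M⁻¹` and `Q = N⁻¹`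
def IsKKTPoint (x : n → ℝ) (μ : ℝ) : Prop :=
  0 ≤ μ ∧ μ • misfitGrad A b P x + Q *ᵥ x = 0 ∧ misfit A b P x = τ

variable {P Q τ}

lemma misfit_eq_of_isMinOn (hQ : Q.PosDef) (hτ : τ < b ⬝ᵥ P *ᵥ b)
    {xs : n → ℝ} (hxs : misfit A b P xs ≤ τ)
    (hmin : IsMinOn (fun x => x ⬝ᵥ Q *ᵥ x) {x | misfit A b P x ≤ τ} xs) :
    misfit A b P xs = τ := by
  refine hxs.eq_of_not_lt fun hlt => ?_
  have hxs0 : xs ≠ 0 := by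
    rintro rfl
    rw [misfit_zero] at hlt
    linarith
  have hq : 0 < xs ⬝ᵥ Q *ᵥ xs := by simpa using hQ.dotProduct_mulVec_pos hxs0
  have hfeas : ∀ᶠ t in 𝓝[>] (0 : ℝ), misfit A b P (xs + t • -xs) < τ := by
    have hlim : Tendsto (fun t : ℝ => misfit A b P (xs + t • -xs)) (𝓝 0) (𝓝 (misfit A b P xs)) :=
      (by fun_prop : Continuous fun t : ℝ => misfit A b P (xs + t • -xs)).tendsto' 0 _ (by simp)
    exact nhdsWithin_le_nhds (hlim.eventually_lt_const hlt)
  obtain ⟨t, hmem, hdesc⟩ := (hfeas.and (eventually_mul_add_sq_mul_neg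
    (by rw [neg_dotProduct]; linarith : 2 * (-xs ⬝ᵥ Q *ᵥ xs) < 0) (-xs ⬝ᵥ Q *ᵥ -xs))).exists
  have hle : xs ⬝ᵥ Q *ᵥ xs ≤ (xs + t • -xs) ⬝ᵥ Q *ᵥ (xs + t • -xs) := hmin hmem.le
  rw [hQ.posSemidef.isSymm.add_smul_dotProduct_mulVec_add_smul] at hle
  linarith

lemma dotProduct_mulVec_nonneg_of_isMinOn (hP : P.IsSymm) (hQ : Q.IsSymm) {xs : n → ℝ}
    (hmin : IsMinOn (fun x => x ⬝ᵥ Q *ᵥ x) {x | misfit A b P x ≤ τ} xs)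
    (hact : misfit A b P xs = τ) {d : n → ℝ} (hd : d ⬝ᵥ misfitGrad A b P xs < 0) :
    0 ≤ d ⬝ᵥ Q *ᵥ xs := by
  by_contra! hdq
  obtain ⟨t, hmisfit, hq⟩ := ((eventually_mul_add_sq_mul_neg
    (by linarith : 2 * (d ⬝ᵥ misfitGrad A b P xs) < 0) ((A *ᵥ d) ⬝ᵥ P *ᵥ (A *ᵥ d))).and
    (eventually_mul_add_sq_mul_neg (by linarith : 2 * (d ⬝ᵥ Q *ᵥ xs) < 0) (d ⬝ᵥ Q *ᵥ d))).exists
  have hmem : misfit A b P (xs + t • d) ≤ τ := by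
    rw [misfit_add_smul A b hP]
    linarith
  have hle : xs ⬝ᵥ Q *ᵥ xs ≤ (xs + t • d) ⬝ᵥ Q *ᵥ (xs + t • d) := hmin hmem
  rw [hQ.add_smul_dotProduct_mulVec_add_smul] at hle
  linarith

lemma misfitGrad_ne_zero (hP : P.PosSemidef)
    (hls : ∀ x, (∀ z, misfit A b P x ≤ misfit A b P z) → misfit A b P x < τ) {x : n → ℝ}
    (hx : misfit A b P x = τ) : misfitGrad A b P x ≠ 0 := fun h =>
  (hls x (misfit_le_of_misfitGrad_eq_zero A b hP h)).ne hx

theorem exists_isKKTPoint (hP : P.PosDef) (hQ : Q.PosDef)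
    (hls : ∀ x, (∀ z, misfit A b P x ≤ misfit A b P z) → misfit A b P x < τ)
    (hτ : τ < b ⬝ᵥ P *ᵥ b) : ∃ x μ, IsKKTPoint A b P Q τ x μ := by
  obtain ⟨xls, hxls⟩ := exists_forall_misfit_le A b hP
  obtain ⟨xs, hxs, hmin⟩ := exists_isMinOn_of_tendsto_cocompact (by fun_prop)
    hQ.tendsto_dotProduct_mulVec_cocompact
    (isClosed_le (continuous_misfit A b P) continuous_const) ⟨xls, (hls xls hxls).le⟩
  have hact := misfit_eq_of_isMinOn A b hQ hτ hxs hmin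
  obtain ⟨μ, hμ, hKKT⟩ := exists_nonneg_smul_add_eq_zero
    (misfitGrad_ne_zero A b hP.posSemidef hls hact)
    fun d hd => dotProduct_mulVec_nonneg_of_isMinOn A b hP.posSemidef.isSymm
      hQ.posSemidef.isSymm hmin hact hd
  exact ⟨xs, μ, hμ, hKKT, hact⟩

lemma IsKKTPoint.le_mul_misfit_add_dotProduct_mulVec (hP : P.PosSemidef) (hQ : Q.IsSymm)
    {x : n → ℝ} {μ : ℝ} (h : IsKKTPoint A b P Q τ x μ) (z : n → ℝ) :
    μ * τ + x ⬝ᵥ Q *ᵥ x + (z - x) ⬝ᵥ Q *ᵥ (z - x) ≤ μ * misfit A b P z + z ⬝ᵥ Q *ᵥ z := by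
  obtain ⟨hμ, hstat, hact⟩ := h
  have hmisfit := misfit_add A b hP.isSymm x (z - x)
  have hq := hQ.add_dotProduct_mulVec_add x (z - x)
  rw [add_sub_cancel] at hmisfit hq
  have horth : (z - x) ⬝ᵥ (μ • misfitGrad A b P x + Q *ᵥ x) = 0 := by rw [hstat, dotProduct_zero]
  rw [dotProduct_add, dotProduct_smul, smul_eq_mul] at horth
  have hcurv := hP.dotProduct_mulVec_nonneg (A *ᵥ (z - x))
  rw [star_trivial] at hcurv
  have := mul_nonneg hμ hcurv
  rw [hmisfit, hq, hact]
  linarith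

theorem IsKKTPoint.unique (hP : P.PosSemidef) (hQ : Q.PosDef)
    (hls : ∀ x, (∀ z, misfit A b P x ≤ misfit A b P z) → misfit A b P x < τ)
    {x x' : n → ℝ} {μ μ' : ℝ} (h : IsKKTPoint A b P Q τ x μ) (h' : IsKKTPoint A b P Q τ x' μ') :
    x = x' ∧ μ = μ' := by
  have hle := h.le_mul_misfit_add_dotProduct_mulVec A b hP hQ.posSemidef.isSymm x'
  have hle' := h'.le_mul_misfit_add_dotProduct_mulVec A b hP hQ.posSemidef.isSymm x
  obtain ⟨-, hstat, hact⟩ := h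
  obtain ⟨-, hstat', hact'⟩ := h'
  rw [hact] at hle'
  rw [hact'] at hle
  have hx : x' - x = 0 := by
    by_contra hne
    have hpos := hQ.dotProduct_mulVec_pos hne
    have hnonneg := hQ.posSemidef.dotProduct_mulVec_nonneg (x - x')
    rw [star_trivial] at hpos hnonneg
    linarith
  obtain rfl := (sub_eq_zero.mp hx).symm
  refine ⟨rfl, ?_⟩
  have hsmul : (μ - μ') • misfitGrad A b P x = 0 := by
    rw [sub_smul, sub_eq_zero]
    exact add_right_cancel (hstat.trans hstat'.symm)
  exact sub_eq_zero.mp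
    ((smul_eq_zero.mp hsmul).resolve_right (misfitGrad_ne_zero A b hP hls hact))

end KKT

theorem stmt_5_general {m n : ℕ} (A : Matrix (Fin m) (Fin n) ℝ) (b : Fin m → ℝ)
    (M : Matrix (Fin m) (Fin m) ℝ) (N : Matrix (Fin n) (Fin n) ℝ)
    (hM : M.PosDef) (hN : N.PosDef) (τm : ℝ)
    (hassump : ∀ x : Fin n → ℝ,
      (∀ z : Fin n → ℝ, (A *ᵥ x - b) ⬝ᵥ (M⁻¹ *ᵥ (A *ᵥ x - b)) ≤
          (A *ᵥ z - b) ⬝ᵥ (M⁻¹ *ᵥ (A *ᵥ z - b))) →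
        (A *ᵥ x - b) ⬝ᵥ (M⁻¹ *ᵥ (A *ᵥ x - b)) < τm ∧ τm < b ⬝ᵥ (M⁻¹ *ᵥ b)) :
    ∃! p : (Fin n → ℝ) × ℝ, 0 ≤ p.2 ∧
      p.2 • (Aᵀ *ᵥ (M⁻¹ *ᵥ (A *ᵥ p.1 - b))) + N⁻¹ *ᵥ p.1 = 0 ∧
      (1 / 2) * ((A *ᵥ p.1 - b) ⬝ᵥ (M⁻¹ *ᵥ (A *ᵥ p.1 - b))) - τm / 2 = 0 := by
  have hls : ∀ x, (∀ z, misfit A b M⁻¹ x ≤ misfit A b M⁻¹ z) → misfit A b M⁻¹ x < τm :=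
    fun x hx => (hassump x hx).1
  have hτ : τm < b ⬝ᵥ M⁻¹ *ᵥ b :=
    let ⟨xls, hxls⟩ := exists_forall_misfit_le A b hM.inv
    (hassump xls hxls).2
  have hiff (p : (Fin n → ℝ) × ℝ) : IsKKTPoint A b M⁻¹ N⁻¹ τm p.1 p.2 ↔ 0 ≤ p.2 ∧
      p.2 • (Aᵀ *ᵥ (M⁻¹ *ᵥ (A *ᵥ p.1 - b))) + N⁻¹ *ᵥ p.1 = 0 ∧
      (1 / 2) * ((A *ᵥ p.1 - b) ⬝ᵥ (M⁻¹ *ᵥ (A *ᵥ p.1 - b))) - τm / 2 = 0 := by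
    refine and_congr_right' (and_congr_right' ?_)
    unfold misfit
    constructor <;> intro h <;> linarith
  refine (existsUnique_congr hiff).mp ?_
  obtain ⟨x, μ, hKKT⟩ := exists_isKKTPoint A b hM.inv hN.inv hls hτ
  refine ⟨(x, μ), hKKT, fun p hp => ?_⟩
  obtain ⟨hx, hμ⟩ := hp.unique A b hM.inv.posSemidef hN.inv hls hKKT
  exact Prod.ext hx hμ

/-- The gradient equation F(x, λ) = 0 has a unique solution (x*, λ*) in
ℝⁿ × [0, ∞). -/
theorem stmt_5 {m n : ℕ} (A : Matrix (Fin m) (Fin n) ℝ) (b : Fin m → ℝ)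
    (M : Matrix (Fin m) (Fin m) ℝ) (N : Matrix (Fin n) (Fin n) ℝ)
    (hM : M.PosDef) (hN : N.PosDef) (τm : ℝ) (hτm : 0 < τm)
    (hassump : ∀ x : Fin n → ℝ,
      (∀ z : Fin n → ℝ, (A *ᵥ x - b) ⬝ᵥ (M⁻¹ *ᵥ (A *ᵥ x - b)) ≤
          (A *ᵥ z - b) ⬝ᵥ (M⁻¹ *ᵥ (A *ᵥ z - b))) →
        (A *ᵥ x - b) ⬝ᵥ (M⁻¹ *ᵥ (A *ᵥ x - b)) < τm ∧ τm < b ⬝ᵥ (M⁻¹ *ᵥ b)) :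
    ∃! p : (Fin n → ℝ) × ℝ, 0 ≤ p.2 ∧
      p.2 • (Aᵀ *ᵥ (M⁻¹ *ᵥ (A *ᵥ p.1 - b))) + N⁻¹ *ᵥ p.1 = 0 ∧
      (1 / 2) * ((A *ᵥ p.1 - b) ⬝ᵥ (M⁻¹ *ᵥ (A *ᵥ p.1 - b))) - τm / 2 = 0 :=
  stmt_5_general A b M N hM hN τm hassump
end
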